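/- As x → ∞, the sum over primes p with p ≤ x/2 of 1/(p·log(x/p)) satisfies ∑_{p ≤ x/2} 1/(p·log(x/p)) = O(log log x / log x). -/

import Mathlib

open Filter Asymptotics Real Finset

attribute [local instance] Classical.propDecidable

/-- Real value of the zeta series `∑ 1/n^s`. -/
noncomputable def zetaR (s : ℝ) : ℝ := ∑' n : ℕ, 1 / (n : ℝ) ^ s

/-- The Mertens constant `B₁ = γ + ∑_p (log(1 - 1/p) + 1/p)`. -/
noncomputable def mertensB1 : ℝ :=
  Real.eulerMascheroniConstant +
    ∑' p : Nat.Primes, (Real.log (1 - 1 / ((p : ℕ) : ℝ)) + 1 / ((p : ℕ) : ℝ))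

/-- The constant `B₂ = B₁ + ∑_p 1/(p(p-1))`. -/
noncomputable def mertensB2 : ℝ :=
  mertensB1 + ∑' p : Nat.Primes, 1 / (((p : ℕ) : ℝ) * (((p : ℕ) : ℝ) - 1))

/-- `ω n`, the number of distinct prime factors of `n`. -/
def smallOmega (n : ℕ) : ℕ := n.primeFactors.card

/-- `Ω n`, the number of prime factors of `n` counted with multiplicity. -/
def bigOmega (n : ℕ) : ℕ := n.primeFactorsList.length

/-- `n` is `h`-free: every prime occurs with multiplicity at most `h - 1`. -/
def IsHFree (h n : ℕ) : Prop := ∀ p : ℕ, p.Prime → ¬ p ^ h ∣ n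

/-- `n` is `h`-full: every prime dividing `n` occurs with multiplicity at least `h`. -/
def IsHFull (h n : ℕ) : Prop := 0 < n ∧ ∀ p : ℕ, p.Prime → p ∣ n → p ^ h ∣ n

/-- `γ₀ₕ = ∏_p (1 + (p - p^{1/h})/(p²(p^{1/h} - 1)))`. -/
noncomputable def gamma0 (h : ℕ) : ℝ :=
  ∏' p : Nat.Primes,
    (1 + (((p:ℕ):ℝ) - ((p:ℕ):ℝ) ^ (1 / (h:ℝ))) /
      (((p:ℕ):ℝ) ^ 2 * (((p:ℕ):ℝ) ^ (1 / (h:ℝ)) - 1)))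

/-- `𝓛_h(r) = ∑_p 1/(p^{(r/h)-1}(p - p^{1-1/h} + 1))`. -/
noncomputable def Lh (h : ℕ) (r : ℝ) : ℝ :=
  ∑' p : Nat.Primes,
    1 / (((p:ℕ):ℝ) ^ (r / (h:ℝ) - 1) *
      (((p:ℕ):ℝ) - ((p:ℕ):ℝ) ^ (1 - 1 / (h:ℝ)) + 1))

/-- `C₁ = B₁ - ∑_p (p-1)/(p(p^h - 1))`. -/
noncomputable def C1 (h : ℕ) : ℝ :=
  mertensB1 - ∑' p : Nat.Primes, (((p:ℕ):ℝ) - 1) / (((p:ℕ):ℝ) * (((p:ℕ):ℝ) ^ h - 1))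

/-- `C₂ = C₁² + C₁ - ζ(2) - ∑_p ((p^{h-1}-1)/(p^h-1))²`. -/
noncomputable def C2 (h : ℕ) : ℝ :=
  C1 h ^ 2 + C1 h - zetaR 2 -
    ∑' p : Nat.Primes, ((((p:ℕ):ℝ) ^ (h - 1) - 1) / (((p:ℕ):ℝ) ^ h - 1)) ^ 2

/-- `C₃ = B₂ - ∑_p h/(p^h - 1)`. -/
noncomputable def C3 (h : ℕ) : ℝ :=
  mertensB2 - ∑' p : Nat.Primes, (h : ℝ) / (((p:ℕ):ℝ) ^ h - 1)

/-- `C₄ = C₃² + C₃ - ζ(2) - ∑_p ((p^h - hp + h - 1)/((p-1)(p^h-1)))²`. -/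
noncomputable def C4 (h : ℕ) : ℝ :=
  C3 h ^ 2 + C3 h - zetaR 2 -
    ∑' p : Nat.Primes,
      ((((p:ℕ):ℝ) ^ h - (h:ℝ) * ((p:ℕ):ℝ) + (h:ℝ) - 1) /
        ((((p:ℕ):ℝ) - 1) * (((p:ℕ):ℝ) ^ h - 1))) ^ 2

/-- `D₁ = B₁ - log h + 𝓛_h(h+1) - 𝓛_h(2h)`. -/
noncomputable def D1 (h : ℕ) : ℝ :=
  mertensB1 - Real.log h + Lh h ((h:ℝ) + 1) - Lh h (2 * (h:ℝ))

/-- `D₂ = D₁² + D₁ - ζ(2) - ∑_p (1/(p - p^{1-1/h} + 1))²`. -/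
noncomputable def D2 (h : ℕ) : ℝ :=
  D1 h ^ 2 + D1 h - zetaR 2 -
    ∑' p : Nat.Primes,
      (1 / (((p:ℕ):ℝ) - ((p:ℕ):ℝ) ^ (1 - 1 / (h:ℝ)) + 1)) ^ 2

/-- `B₃ = h(B₂ - log h) + ∑_p ((h+1)p^{1+1/h} - hp - 2hp^{2/h} + (2h-1)p^{1/h}) /
      ((p-1)(p^{1/h}-1)(p^{1+1/h}+p^{1/h}-p))`. -/
noncomputable def B3 (h : ℕ) : ℝ :=
  (h : ℝ) * (mertensB2 - Real.log h) +
    ∑' p : Nat.Primes,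
      (((h:ℝ) + 1) * ((p:ℕ):ℝ) ^ (1 + 1 / (h:ℝ)) - (h:ℝ) * ((p:ℕ):ℝ) -
          2 * (h:ℝ) * ((p:ℕ):ℝ) ^ (2 / (h:ℝ)) +
          (2 * (h:ℝ) - 1) * ((p:ℕ):ℝ) ^ (1 / (h:ℝ))) /
        ((((p:ℕ):ℝ) - 1) * (((p:ℕ):ℝ) ^ (1 / (h:ℝ)) - 1) *
          (((p:ℕ):ℝ) ^ (1 + 1 / (h:ℝ)) + ((p:ℕ):ℝ) ^ (1 / (h:ℝ)) - ((p:ℕ):ℝ)))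

/-- `B₄ = B₃² + B₃ - h²ζ(2) - ∑_p ((h(p^{1/h}-1)+1)/((p^{1/h}-1)(p-p^{1-1/h}+1)))²`. -/
noncomputable def B4 (h : ℕ) : ℝ :=
  B3 h ^ 2 + B3 h - (h:ℝ) ^ 2 * zetaR 2 -
    ∑' p : Nat.Primes,
      (((h:ℝ) * (((p:ℕ):ℝ) ^ (1 / (h:ℝ)) - 1) + 1) /
        ((((p:ℕ):ℝ) ^ (1 / (h:ℝ)) - 1) *
          (((p:ℕ):ℝ) - ((p:ℕ):ℝ) ^ (1 - 1 / (h:ℝ)) + 1))) ^ 2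

/-!
Split the primes `p ≤ x/2` into dyadic blocks `x/2^(k+1) < p ≤ x/2^k`, `1 ≤ k < n`, where
`2^n ≤ x < 2^(n+1)`. On block `k` we have `log (x/p) ≥ k log 2`, while `p² ≥ 2p > x/2^k ≥ 2^(n-k)`
gives `log p ≥ (n-k) log 2 / 2`, so Chebyshev's bound `θ(x/2^k) ≤ log 4 · x/2^k` allows
`O(x / (2^k (n-k)))` primes in the block. The block therefore contributes `O(1/(k(n-k)))`, and
`∑_{1≤k<n} 1/(k(n-k)) = (2/n) ∑_{1≤k<n} 1/k = O(log n / n) = O(log log x / log x)`.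
-/

open Chebyshev

theorem sum_Ico_inv_mul_sub_le (n : ℕ) :
    ∑ k ∈ Ico 1 n, ((k : ℝ) * (n - k))⁻¹ ≤ 2 * (1 + log n) / n := by
  have hsplit : ∀ k ∈ Ico 1 n, ((k : ℝ) * (n - k))⁻¹ = ((k : ℝ)⁻¹ + ((n - k : ℕ) : ℝ)⁻¹) / n := by
    intro k hk
    obtain ⟨hk1, hkn⟩ := mem_Ico.mp hk
    have hk0 : (k : ℝ) ≠ 0 := by positivity
    have hn0 : (n : ℝ) ≠ 0 := by exact_mod_cast (Nat.zero_lt_of_lt hkn).ne'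
    have hnk : (n : ℝ) - k ≠ 0 := sub_ne_zero.mpr (by exact_mod_cast hkn.ne')
    rw [Nat.cast_sub hkn.le]
    field_simp
    ring
  have hreflect : ∑ k ∈ Ico 1 n, ((n - k : ℕ) : ℝ)⁻¹ = ∑ k ∈ Ico 1 n, (k : ℝ)⁻¹ := by
    rw [sum_Ico_reflect (fun k => (k : ℝ)⁻¹) 1 (Nat.le_succ n)]
    simp
  have hharmonic : ∑ k ∈ Ico 1 n, (k : ℝ)⁻¹ ≤ 1 + log n := calc
    _ ≤ ∑ k ∈ Icc 1 n, (k : ℝ)⁻¹ :=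
      sum_le_sum_of_subset_of_nonneg Ico_subset_Icc_self fun _ _ _ => by positivity
    _ = harmonic n := by simp [harmonic_eq_sum_Icc]
    _ ≤ 1 + log n := harmonic_le_one_add_log n
  rw [sum_congr rfl hsplit, ← sum_div, sum_add_distrib, hreflect]
  gcongr
  linarith

theorem card_mul_le_theta {s : Finset ℕ} {y m : ℝ}
    (hs : ∀ p ∈ s, p.Prime ∧ (p : ℝ) ≤ y ∧ m ≤ log p) : #s * m ≤ θ y := calc
  #s * m = ∑ _p ∈ s, m := by simp
  _ ≤ ∑ p ∈ s, log p := sum_le_sum fun p hp => (hs p hp).2.2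
  _ ≤ θ y := by
    rw [theta]
    refine sum_le_sum_of_subset_of_nonneg (fun p hp => ?_) fun p _ _ => log_natCast_nonneg p
    obtain ⟨hprime, hpy, -⟩ := hs p hp
    simp only [mem_filter, mem_Ioc]
    exact ⟨⟨hprime.pos, Nat.le_floor hpy⟩, hprime⟩

theorem two_pow_log_floor_le_and_lt {y : ℝ} (hy : 1 ≤ y) :
    (2 : ℝ) ^ Nat.log 2 ⌊y⌋₊ ≤ y ∧ y < 2 ^ (Nat.log 2 ⌊y⌋₊ + 1) := by
  have hfloor : ⌊y⌋₊ ≠ 0 := Nat.one_le_iff_ne_zero.mp ((Nat.one_le_floor_iff y).mpr hy)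
  constructor
  · calc (2 : ℝ) ^ Nat.log 2 ⌊y⌋₊ ≤ ⌊y⌋₊ := by exact_mod_cast Nat.pow_log_le_self 2 hfloor
      _ ≤ y := Nat.floor_le (by linarith)
  · calc y < ⌊y⌋₊ + 1 := Nat.lt_floor_add_one y
      _ ≤ 2 ^ (Nat.log 2 ⌊y⌋₊ + 1) := by exact_mod_cast Nat.lt_pow_succ_log_self one_lt_two _

theorem sum_one_div_mul_log_div_le_of_dyadic {x : ℝ} {k n : ℕ} (hk : 1 ≤ k) (hkn : k < n)
    (hx : (2 : ℝ) ^ n ≤ x) {s : Finset ℕ}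
    (hs : ∀ p ∈ s, p.Prime ∧ (2 : ℝ) ^ k ≤ x / p ∧ x / p < 2 ^ (k + 1)) :
    ∑ p ∈ s, 1 / ((p : ℝ) * log (x / p)) ≤ 4 * log 4 / log 2 ^ 2 * ((k : ℝ) * (n - k))⁻¹ := by
  have hx0 : 0 < x := lt_of_lt_of_le (by positivity) hx
  have hnk : (0 : ℝ) < n - k := sub_pos.mpr (by exact_mod_cast hkn)
  have hbounds : ∀ p ∈ s, 2 ≤ (p : ℝ) ∧ x / 2 ^ (k + 1) < p ∧ (p : ℝ) ≤ x / 2 ^ k := by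
    intro p hp
    obtain ⟨hprime, hlow, hupp⟩ := hs p hp
    have hp0 : (0 : ℝ) < p := by exact_mod_cast hprime.pos
    refine ⟨by exact_mod_cast hprime.two_le, ?_, ?_⟩
    · rw [div_lt_iff₀ (by positivity)]; rwa [div_lt_iff₀ hp0, mul_comm] at hupp
    · rwa [le_div_iff₀ hp0, mul_comm, ← le_div_iff₀ (by positivity)] at hlow
  have hterm : ∀ p ∈ s, 1 / ((p : ℝ) * log (x / p)) ≤ 2 ^ (k + 1) / (x * (k * log 2)) := by
    intro p hp
    obtain ⟨-, hlow, -⟩ := hs p hp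
    obtain ⟨-, hplow, -⟩ := hbounds p hp
    have hlog : k * log 2 ≤ log (x / p) := by
      simpa [Real.log_pow] using log_le_log (by positivity) hlow
    calc 1 / ((p : ℝ) * log (x / p)) ≤ 1 / (x / 2 ^ (k + 1) * (k * log 2)) := by
          gcongr
      _ = 2 ^ (k + 1) / (x * (k * log 2)) := by field_simp
  have hcard : #s * ((n - k) * log 2 / 2) ≤ log 4 * (x / 2 ^ k) := by
    refine (card_mul_le_theta fun p hp => ?_).trans (theta_le_log4_mul_x (by positivity))
    obtain ⟨hp2, hplow, hpupp⟩ := hbounds p hp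
    refine ⟨(hs p hp).1, hpupp, ?_⟩
    have hsq : (2 : ℝ) ^ (n - k) ≤ p ^ 2 := calc
      (2 : ℝ) ^ (n - k) = 2 ^ n / 2 ^ k := by rw [pow_sub₀ _ two_ne_zero hkn.le, div_eq_mul_inv]
      _ ≤ x / 2 ^ k := by gcongr
      _ = 2 * (x / 2 ^ (k + 1)) := by rw [pow_succ]; field_simp
      _ ≤ p ^ 2 := by nlinarith
    have := log_le_log (by positivity) hsq
    rw [Real.log_pow, Real.log_pow, Nat.cast_sub hkn.le, Nat.cast_two] at this
    linarith
  calc ∑ p ∈ s, 1 / ((p : ℝ) * log (x / p))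
      ≤ #s * (2 ^ (k + 1) / (x * (k * log 2))) := by
        simpa using sum_le_card_nsmul s _ _ hterm
    _ ≤ (log 4 * (x / 2 ^ k) / ((n - k) * log 2 / 2)) * (2 ^ (k + 1) / (x * (k * log 2))) := by
        gcongr
        rwa [le_div_iff₀ (by positivity)]
    _ = 4 * log 4 / log 2 ^ 2 * ((k : ℝ) * (n - k))⁻¹ := by
        field_simp
        ring

theorem two_le_div_of_mem_primes_le_half {x : ℝ} {p : ℕ}
    (hp : p ∈ (Icc 1 ⌊x / 2⌋₊).filter Nat.Prime) : p.Prime ∧ 2 ≤ (p : ℝ) ∧ 2 ≤ x / p := by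
  obtain ⟨hpIcc, hprime⟩ := mem_filter.mp hp
  obtain ⟨hp1, hpfloor⟩ := mem_Icc.mp hpIcc
  have hp2 : (2 : ℝ) ≤ p := by exact_mod_cast hprime.two_le
  have hpx : (p : ℝ) ≤ x / 2 :=
    (Nat.cast_le.mpr hpfloor).trans (Nat.floor_le (zero_le_one.trans (Nat.floor_pos.mp (by omega))))
  exact ⟨hprime, hp2, by rw [le_div_iff₀ (by positivity)]; linarith⟩

theorem sum_one_div_mul_log_div_le {x : ℝ} {n : ℕ} (hx : (2 : ℝ) ^ n ≤ x)
    (hx' : x < 2 ^ (n + 1)) :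
    ∑ p ∈ (Icc 1 ⌊x / 2⌋₊).filter Nat.Prime, 1 / ((p : ℝ) * log (x / p)) ≤
      4 * log 4 / log 2 ^ 2 * (2 * (1 + log n) / n) := by
  set P := (Icc 1 ⌊x / 2⌋₊).filter Nat.Prime
  set index : ℕ → ℕ := fun p => Nat.log 2 ⌊x / p⌋₊
  have hindex : ∀ p ∈ P, p.Prime ∧ (2 : ℝ) ^ index p ≤ x / p ∧ x / p < 2 ^ (index p + 1) ∧
      index p ∈ Ico 1 n := by
    intro p hp
    obtain ⟨hprime, hp2, hxp⟩ := two_le_div_of_mem_primes_le_half hp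
    obtain ⟨hlow, hupp⟩ := two_pow_log_floor_le_and_lt (y := x / p) (by linarith)
    refine ⟨hprime, hlow, hupp, mem_Ico.mpr ⟨?_, ?_⟩⟩
    · have : (2 : ℝ) ^ 1 < 2 ^ (index p + 1) := by linarith
      have := (pow_lt_pow_iff_right₀ one_lt_two).mp this
      omega
    · have : (2 : ℝ) ^ index p < 2 ^ n := calc
        _ ≤ x / p := hlow
        _ ≤ x / 2 := by gcongr; exact (pow_pos two_pos n).le.trans hx
        _ < 2 ^ n := by rw [pow_succ] at hx'; linarith
      exact (pow_lt_pow_iff_right₀ one_lt_two).mp this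
  calc ∑ p ∈ P, 1 / ((p : ℝ) * log (x / p))
      = ∑ k ∈ Ico 1 n, ∑ p ∈ P with index p = k, 1 / ((p : ℝ) * log (x / p)) :=
        (sum_fiberwise_of_maps_to (fun p hp => (hindex p hp).2.2.2) _).symm
    _ ≤ ∑ k ∈ Ico 1 n, 4 * log 4 / log 2 ^ 2 * ((k : ℝ) * (n - k))⁻¹ := by
        refine sum_le_sum fun k hk => ?_
        obtain ⟨hk1, hkn⟩ := mem_Ico.mp hk
        refine sum_one_div_mul_log_div_le_of_dyadic hk1 hkn hx fun p hp => ?_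
        obtain ⟨hpP, rfl⟩ := mem_filter.mp hp
        exact ⟨(hindex p hpP).1, (hindex p hpP).2.1, (hindex p hpP).2.2.1⟩
    _ ≤ 4 * log 4 / log 2 ^ 2 * (2 * (1 + log n) / n) := by
        rw [← mul_sum]
        exact mul_le_mul_of_nonneg_left (sum_Ico_inv_mul_sub_le n) (by positivity)

theorem one_add_log_div_le_log_log_div_log {x : ℝ} {n : ℕ} (hx : (2 : ℝ) ^ n ≤ x)
    (hx' : x < 2 ^ (n + 1)) (hloglog : 1 ≤ log (log x)) :
    (1 + log n) / n ≤ 6 * (log (log x) / log x) := by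
  set L := log x
  have hc : 1 / 2 < log 2 := by linarith [log_two_gt_d9]
  have hc' : log 2 < 1 := by linarith [log_two_lt_d9]
  have hnL : n * log 2 ≤ L := by
    simpa [Real.log_pow] using log_le_log (by positivity) hx
  have hLn : L < (n + 1) * log 2 := by
    have := log_lt_log (lt_of_lt_of_le (by positivity) hx) hx'
    rwa [Real.log_pow, Nat.cast_succ] at this
  have hL0 : 0 < L := by
    rcases (hnL.trans' (by positivity) : 0 ≤ L).lt_or_eq with h | h
    · exact h
    · rw [← h, log_zero] at hloglog; linarith
  have hL2 : 2 < L := by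
    have := (le_log_iff_exp_le hL0).mp hloglog
    linarith [exp_one_gt_two]
  have hn : L / 2 ≤ n := by nlinarith
  have hn1 : (1 : ℝ) ≤ n := by linarith
  have hlogn : log n ≤ 1 + log L := calc
    log n ≤ log (2 * L) := log_le_log (by linarith) (by nlinarith)
    _ = log 2 + log L := log_mul two_ne_zero hL0.ne'
    _ ≤ 1 + log L := by linarith
  rw [div_le_iff₀ (by linarith)]
  calc 1 + log n ≤ 3 * log L := by linarith
    _ = 6 * (log L / L) * (L / 2) := by field_simp; norm_num
    _ ≤ 6 * (log L / L) * n := by gcongr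

theorem sum_one_div_p_log_x_div_p :
    (fun x : ℝ =>
      ∑ p ∈ (Finset.Icc 1 ⌊x / 2⌋₊).filter Nat.Prime,
        1 / ((p : ℝ) * Real.log (x / (p : ℝ))))
      =O[atTop] fun x : ℝ => Real.log (Real.log x) / Real.log x := by
  refine IsBigO.of_bound (48 * log 4 / log 2 ^ 2) ?_
  filter_upwards [eventually_ge_atTop 1,
    (tendsto_log_atTop.comp tendsto_log_atTop).eventually_ge_atTop 1] with x hx hloglog
  rw [Function.comp_apply] at hloglog
  obtain ⟨hlow, hupp⟩ := two_pow_log_floor_le_and_lt hx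
  have hsum_nonneg : 0 ≤ ∑ p ∈ (Icc 1 ⌊x / 2⌋₊).filter Nat.Prime, 1 / ((p : ℝ) * log (x / p)) :=
    sum_nonneg fun p hp => by
      obtain ⟨-, -, hxp⟩ := two_le_div_of_mem_primes_le_half hp
      exact div_nonneg zero_le_one (mul_nonneg (by positivity) (log_nonneg (by linarith)))
  rw [norm_of_nonneg hsum_nonneg, norm_of_nonneg (div_nonneg (by linarith) (log_nonneg hx))]
  calc _ ≤ 4 * log 4 / log 2 ^ 2 * (2 * (1 + log _) / _) := sum_one_div_mul_log_div_le hlow hupp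
    _ ≤ 4 * log 4 / log 2 ^ 2 * (2 * (6 * (log (log x) / log x))) := by
        rw [mul_div_assoc (2 : ℝ)]
        gcongr
        exact one_add_log_div_le_log_log_div_log hlow hupp hloglog
    _ = 48 * log 4 / log 2 ^ 2 * (log (log x) / log x) := by ring
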